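/- arXiv:1308.2096 — 2 statements merged into one kernel-verified Lean document; each statement's English description precedes it below -/
import Mathlib

section
/- Let G be a finite simple graph of order n, maximum degree Δ and minimum degree δ, and let k be an integer with -Δ ≤ k ≤ Δ. If G contains a global defensive k-alliance, then (√(4n+k²)+k)/2 ≤ γ_k^d(G) ≤ n - ⌊(δ-k)/2⌋. -/
open Finset

variable {V : Type*}

/-- `degIn G S v` is the number of neighbors that `v` has in `S` (denoted `δ_S(v)`). -/
def degIn [Fintype V] [DecidableEq V] (G : SimpleGraph V) [DecidableRel G.Adj]
    (S : Finset V) (v : V) : ℕ :=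
  (G.neighborFinset v ∩ S).card

/-- A nonempty set `S` is a defensive `k`-alliance in `G` if every vertex of `S` has at least
`k` more neighbors inside `S` than outside. -/
def IsDefensiveKAlliance [Fintype V] [DecidableEq V] (G : SimpleGraph V) [DecidableRel G.Adj]
    (k : ℤ) (S : Finset V) : Prop :=
  S.Nonempty ∧ ∀ v ∈ S, (degIn G Sᶜ v : ℤ) + k ≤ (degIn G S v : ℤ)

/-- The defensive `k`-alliance number: minimum cardinality of a defensive `k`-alliance. -/
noncomputable def defensiveAllianceNum [Fintype V] [DecidableEq V] (G : SimpleGraph V)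
    [DecidableRel G.Adj] (k : ℤ) : ℕ :=
  sInf {m : ℕ | ∃ S : Finset V, IsDefensiveKAlliance G k S ∧ S.card = m}

/-- `S` is a dominating set: every vertex outside `S` has a neighbor in `S`. -/
def IsDominatingSet (G : SimpleGraph V) (S : Finset V) : Prop :=
  ∀ v, v ∉ S → ∃ u ∈ S, G.Adj u v

/-- A global defensive `k`-alliance is a defensive `k`-alliance which is also dominating. -/
def IsGlobalDefensiveKAlliance [Fintype V] [DecidableEq V] (G : SimpleGraph V)
    [DecidableRel G.Adj] (k : ℤ) (S : Finset V) : Prop :=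
  IsDefensiveKAlliance G k S ∧ IsDominatingSet G S

/-- The global defensive `k`-alliance number `γ_k^d(G)`. -/
noncomputable def globalDefensiveAllianceNum [Fintype V] [DecidableEq V] (G : SimpleGraph V)
    [DecidableRel G.Adj] (k : ℤ) : ℕ :=
  sInf {m : ℕ | ∃ S : Finset V, IsGlobalDefensiveKAlliance G k S ∧ S.card = m}

/-!
Lower bound: if `S` is a global defensive `k`-alliance with `|S| = γ`, every vertex of `S` has at
most `γ - 1 - k` neighbours outside `S`, while every vertex outside `S` has a neighbour in `S`.
Counting the edges between `S` and its complement gives `n - γ ≤ γ (γ - 1 - k)`, i.e.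
`4n + k² ≤ (2γ - k)²`.

Upper bound: removing from `V` a set `X` of `t ≤ (δ - k)/2` neighbours of a vertex `w` of maximum
degree leaves a defensive `k`-alliance, since every vertex loses at most `t` neighbours; it is
dominating because `w` stays and is adjacent to all of `X`. Such an `X` exists because
`2t ≤ δ - k ≤ 2Δ`.
-/

open SimpleGraph

section

variable [Fintype V] [DecidableEq V] (G : SimpleGraph V) [DecidableRel G.Adj]

theorem degIn_eq_card_filter (S : Finset V) (v : V) : degIn G S v = #{u ∈ S | G.Adj v u} := by
  rw [degIn, inter_comm, ← filter_mem_eq_inter]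
  simp only [mem_neighborFinset]

theorem degIn_add_degIn_compl (S : Finset V) (v : V) :
    degIn G S v + degIn G Sᶜ v = G.degree v := by
  rw [degIn, degIn, ← sdiff_eq_inter_compl, card_inter_add_card_sdiff,
    card_neighborFinset_eq_degree]

theorem degIn_le_card (S : Finset V) (v : V) : degIn G S v ≤ #S :=
  card_le_card inter_subset_right

theorem degIn_lt_card {S : Finset V} {v : V} (hv : v ∈ S) : degIn G S v < #S :=
  card_lt_card ⟨inter_subset_right,
    fun h => notMem_neighborFinset_self G v (mem_of_mem_inter_left (h hv))⟩

theorem sum_degIn_comm (A B : Finset V) : ∑ v ∈ A, degIn G B v = ∑ u ∈ B, degIn G A u := by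
  simp only [degIn_eq_card_filter]
  convert sum_card_bipartiteAbove_eq_sum_card_bipartiteBelow (s := A) (t := B) (r := G.Adj)
    using 3 with u
  · rfl
  · ext
    simp [bipartiteBelow, G.adj_comm]

end

section

variable [Fintype V] [DecidableEq V] {G : SimpleGraph V} [DecidableRel G.Adj] {k : ℤ}
  {S X : Finset V}

theorem IsDefensiveKAlliance.degIn_compl_add_lt_card (hS : IsDefensiveKAlliance G k S) {v : V}
    (hv : v ∈ S) : (degIn G Sᶜ v : ℤ) + k < #S :=
  (hS.2 v hv).trans_lt (by exact_mod_cast degIn_lt_card G hv)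

theorem IsDefensiveKAlliance.lt_card (hS : IsDefensiveKAlliance G k S) : k < #S := by
  obtain ⟨v, hv⟩ := hS.1
  have := hS.degIn_compl_add_lt_card hv
  omega

theorem IsDominatingSet.card_compl_le_sum_degIn (hS : IsDominatingSet G S) :
    #Sᶜ ≤ ∑ v ∈ Sᶜ, degIn G S v := by
  rw [card_eq_sum_ones]
  refine sum_le_sum fun v hv => ?_
  obtain ⟨u, hu, huv⟩ := hS v (mem_compl.1 hv)
  exact card_pos.2 ⟨u, mem_inter.2 ⟨(mem_neighborFinset ..).2 huv.symm, hu⟩⟩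

theorem IsGlobalDefensiveKAlliance.card_univ_le (hS : IsGlobalDefensiveKAlliance G k S) :
    (Fintype.card V : ℤ) ≤ #S * (#S - k) := by
  have hout (v : V) (hv : v ∈ S) : (degIn G Sᶜ v : ℤ) ≤ #S - 1 - k := by
    have := hS.1.degIn_compl_add_lt_card hv
    omega
  have hcount : (#Sᶜ : ℤ) ≤ #S * (#S - 1 - k) := calc
    (#Sᶜ : ℤ) ≤ ∑ v ∈ Sᶜ, (degIn G S v : ℤ) := mod_cast hS.2.card_compl_le_sum_degIn
    _ = ∑ v ∈ S, (degIn G Sᶜ v : ℤ) := by exact_mod_cast sum_degIn_comm G Sᶜ S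
    _ ≤ ∑ v ∈ S, ((#S : ℤ) - 1 - k) := sum_le_sum hout
    _ = #S * (#S - 1 - k) := by rw [sum_const, nsmul_eq_mul]
  have := card_compl_add_card S
  nlinarith

theorem sqrt_four_mul_add_sq_add_div_two_le {a k x : ℝ} (h : a ≤ x * (x - k))
    (hk : k ≤ 2 * x) : (√(4 * a + k ^ 2) + k) / 2 ≤ x := by
  have : √(4 * a + k ^ 2) ≤ 2 * x - k := Real.sqrt_le_iff.2 ⟨by linarith, by nlinarith⟩
  linarith

theorem IsGlobalDefensiveKAlliance.sqrt_add_div_two_le_card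
    (hS : IsGlobalDefensiveKAlliance G k S) :
    (√(4 * (Fintype.card V : ℝ) + (k : ℝ) ^ 2) + k) / 2 ≤ #S := by
  have hk : (k : ℝ) < #S := by exact_mod_cast hS.1.lt_card
  exact sqrt_four_mul_add_sq_add_div_two_le (by exact_mod_cast hS.card_univ_le)
    (by linarith [(#S).cast_nonneg (α := ℝ)])

theorem isDefensiveKAlliance_compl (hne : Xᶜ.Nonempty) (hX : 2 * #X + k ≤ G.minDegree) :
    IsDefensiveKAlliance G k Xᶜ := by
  refine ⟨hne, fun v _ => ?_⟩
  have := degIn_add_degIn_compl G X v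
  have := degIn_le_card G X v
  have := G.minDegree_le_degree v
  rw [compl_compl]
  omega

theorem isDominatingSet_compl_of_subset_neighborFinset {w : V} (hX : X ⊆ G.neighborFinset w) :
    IsDominatingSet G Xᶜ := fun v hv =>
  ⟨w, mem_compl.2 fun hw => G.notMem_neighborFinset_self w (hX hw),
    (mem_neighborFinset ..).1 (hX (by simpa using hv))⟩

theorem exists_isGlobalDefensiveKAlliance_card_add_eq [Nonempty V]
    (hk : -(G.maxDegree : ℤ) ≤ k) {t : ℕ} (ht : 2 * t + k ≤ G.minDegree) :
    ∃ S, IsGlobalDefensiveKAlliance G k S ∧ #S + t = Fintype.card V := by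
  obtain ⟨w, hw⟩ := G.exists_maximal_degree_vertex
  have := G.minDegree_le_maxDegree
  obtain ⟨X, hXw, rfl⟩ : ∃ X ⊆ G.neighborFinset w, #X = t :=
    exists_subset_card_eq (by rw [card_neighborFinset_eq_degree, ← hw]; omega)
  have hwX : w ∈ Xᶜ := mem_compl.2 fun h => G.notMem_neighborFinset_self w (hXw h)
  exact ⟨Xᶜ, ⟨isDefensiveKAlliance_compl ⟨w, hwX⟩ ht,
    isDominatingSet_compl_of_subset_neighborFinset hXw⟩, card_compl_add_card X⟩

theorem exists_isGlobalDefensiveKAlliance_card_eq_globalDefensiveAllianceNum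
    (h : ∃ S, IsGlobalDefensiveKAlliance G k S) :
    ∃ S, IsGlobalDefensiveKAlliance G k S ∧ #S = globalDefensiveAllianceNum G k := by
  obtain ⟨S, hS⟩ := h
  exact Nat.sInf_mem (s := {m | ∃ S, IsGlobalDefensiveKAlliance G k S ∧ #S = m})
    ⟨#S, S, hS, rfl⟩

theorem globalDefensiveAllianceNum_le_card (hS : IsGlobalDefensiveKAlliance G k S) :
    globalDefensiveAllianceNum G k ≤ #S :=
  Nat.sInf_le ⟨S, hS, rfl⟩

end

theorem globalDefensiveAllianceNum_bounds_general [Fintype V] [DecidableEq V] [Nonempty V]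
    (G : SimpleGraph V) [DecidableRel G.Adj] (k : ℤ)
    (hk1 : -(G.maxDegree : ℤ) ≤ k)
    (hex : ∃ S : Finset V, IsGlobalDefensiveKAlliance G k S) :
    (Real.sqrt (4 * (Fintype.card V : ℝ) + (k : ℝ) ^ 2) + (k : ℝ)) / 2 ≤
        (globalDefensiveAllianceNum G k : ℝ) ∧
      (globalDefensiveAllianceNum G k : ℤ) ≤
        (Fintype.card V : ℤ) - ⌊((G.minDegree : ℚ) - (k : ℚ)) / 2⌋ := by
  obtain ⟨S, hS, hγ⟩ :=
    exists_isGlobalDefensiveKAlliance_card_eq_globalDefensiveAllianceNum hex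
  refine ⟨hγ ▸ hS.sqrt_add_div_two_le_card, ?_⟩
  have hfloor : ⌊((G.minDegree : ℚ) - k) / 2⌋ = ((G.minDegree : ℤ) - k) / 2 := by
    exact_mod_cast Rat.floor_intCast_div_natCast ((G.minDegree : ℤ) - k) 2
  rw [hfloor]
  rcases le_or_gt (((G.minDegree : ℤ) - k) / 2) 0 with hle | hpos
  · have := card_le_univ S
    omega
  · obtain ⟨T, hT, hcard⟩ := exists_isGlobalDefensiveKAlliance_card_add_eq hk1
      (t := (((G.minDegree : ℤ) - k) / 2).toNat) (by omega)
    have := globalDefensiveAllianceNum_le_card hT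
    omega

/-- Theorem: for `-Δ ≤ k ≤ Δ`, if `G` contains a global defensive `k`-alliance then
`(√(4n+k²)+k)/2 ≤ γ_k^d(G) ≤ n - ⌊(δ-k)/2⌋`. -/
theorem globalDefensiveAllianceNum_bounds [Fintype V] [DecidableEq V] [Nonempty V]
    (G : SimpleGraph V) [DecidableRel G.Adj] (k : ℤ)
    (hk1 : -(G.maxDegree : ℤ) ≤ k) (hk2 : k ≤ (G.maxDegree : ℤ))
    (hex : ∃ S : Finset V, IsGlobalDefensiveKAlliance G k S) :
    (Real.sqrt (4 * (Fintype.card V : ℝ) + (k : ℝ) ^ 2) + (k : ℝ)) / 2 ≤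
        (globalDefensiveAllianceNum G k : ℝ) ∧
      (globalDefensiveAllianceNum G k : ℤ) ≤
        (Fintype.card V : ℤ) - ⌊((G.minDegree : ℚ) - (k : ℚ)) / 2⌋ :=
  globalDefensiveAllianceNum_bounds_general G k hk1 hex
end

section
/- Let G and H be finite simple graphs and let k₁, k₂ be integers. If S₁ is a defensive k₁-alliance in G and S₂ is a defensive k₂-alliance in H, then S₁ × S₂ is a defensive (k₁+k₂)-alliance in the Cartesian product G□H; consequently, if G contains a defensive k₁-alliance and H contains a defensive k₂-alliance, then a_{k₁+k₂}(G□H) ≤ a_{k₁}(G) · a_{k₂}(H). -/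
open Finset

variable {V : Type*}

instance {α β : Type*} (G : SimpleGraph α) (H : SimpleGraph β) [DecidableEq α] [DecidableEq β]
    [DecidableRel G.Adj] [DecidableRel H.Adj] : DecidableRel (G □ H).Adj := fun _ _ =>
  decidable_of_iff _ (SimpleGraph.boxProd_adj).symm

section BoxProd

variable {V₁ V₂ : Type*} [Fintype V₁] [Fintype V₂] [DecidableEq V₁] [DecidableEq V₂]
  {G : SimpleGraph V₁} {H : SimpleGraph V₂} [DecidableRel G.Adj] [DecidableRel H.Adj]

/-- `P₁` and `P₂` are the row and column of `T` through `(a, b)`; the neighbours of `(a, b)` in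
`G □ H` split disjointly into those in its row and those in its column. -/
theorem degIn_boxProd {a : V₁} {b : V₂} {T : Finset (V₁ × V₂)} {P₁ : Finset V₁}
    {P₂ : Finset V₂} (h₁ : ∀ c, (c, b) ∈ T ↔ c ∈ P₁) (h₂ : ∀ d, (a, d) ∈ T ↔ d ∈ P₂) :
    degIn (G □ H) T (a, b) = degIn G P₁ a + degIn H P₂ b := by
  have hrow : (G.neighborFinset a ×ˢ {b}) ∩ T = (G.neighborFinset a ∩ P₁) ×ˢ {b} := by
    ext ⟨c, d⟩
    simp only [mem_inter, mem_product, mem_singleton]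
    grind
  have hcol : ({a} ×ˢ H.neighborFinset b) ∩ T = {a} ×ˢ (H.neighborFinset b ∩ P₂) := by
    ext ⟨c, d⟩
    simp only [mem_inter, mem_product, mem_singleton]
    grind
  have hdisj : Disjoint (G.neighborFinset a ×ˢ {b}) ({a} ×ˢ H.neighborFinset b) :=
    disjoint_product.mpr <| Or.inl <| G.neighborFinset_disjoint_singleton a
  rw [degIn, SimpleGraph.neighborFinset_boxProd, disjUnion_eq_union, union_inter_distrib_right,
    card_union_of_disjoint (hdisj.mono inter_subset_left inter_subset_left), hrow, hcol,
    card_product, card_product, card_singleton, card_singleton, mul_one, one_mul]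
  rfl

theorem IsDefensiveKAlliance.boxProd {k₁ k₂ : ℤ} {S₁ : Finset V₁} {S₂ : Finset V₂}
    (hS₁ : IsDefensiveKAlliance G k₁ S₁) (hS₂ : IsDefensiveKAlliance H k₂ S₂) :
    IsDefensiveKAlliance (G □ H) (k₁ + k₂) (S₁ ×ˢ S₂) := by
  refine ⟨hS₁.1.product hS₂.1, ?_⟩
  rintro ⟨a, b⟩ hab
  obtain ⟨ha, hb⟩ := mem_product.mp hab
  have hin : degIn (G □ H) (S₁ ×ˢ S₂) (a, b) = degIn G S₁ a + degIn H S₂ b :=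
    degIn_boxProd (by simp [hb]) (by simp [ha])
  have hout : degIn (G □ H) (S₁ ×ˢ S₂)ᶜ (a, b) = degIn G S₁ᶜ a + degIn H S₂ᶜ b :=
    degIn_boxProd (by simp [hb]) (by simp [ha])
  have h₁ := hS₁.2 a ha
  have h₂ := hS₂.2 b hb
  rw [hin, hout]
  push_cast
  linarith

end BoxProd

section AllianceNumber

variable [Fintype V] [DecidableEq V] {G : SimpleGraph V} [DecidableRel G.Adj] {k : ℤ}

theorem defensiveAllianceNum_le_card {S : Finset V} (hS : IsDefensiveKAlliance G k S) :
    defensiveAllianceNum G k ≤ S.card :=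
  Nat.sInf_le ⟨S, hS, rfl⟩

theorem exists_card_eq_defensiveAllianceNum (h : ∃ S, IsDefensiveKAlliance G k S) :
    ∃ S, IsDefensiveKAlliance G k S ∧ S.card = defensiveAllianceNum G k := by
  obtain ⟨S, hS⟩ := h
  exact Nat.sInf_mem (s := {m | ∃ S : Finset V, IsDefensiveKAlliance G k S ∧ S.card = m})
    ⟨S.card, S, hS, rfl⟩

end AllianceNumber

/-- Theorem: if `S₁` is a defensive `k₁`-alliance in `G` and `S₂` is a defensive `k₂`-alliance
in `H`, then `S₁ × S₂` is a defensive `(k₁+k₂)`-alliance in `G □ H`; consequently, if such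
alliances exist then `a_{k₁+k₂}(G □ H) ≤ a_{k₁}(G) · a_{k₂}(H)`. -/
theorem boxProd_defensiveAlliance {V₁ V₂ : Type*} [Fintype V₁] [Fintype V₂]
    [DecidableEq V₁] [DecidableEq V₂] (G : SimpleGraph V₁) (H : SimpleGraph V₂)
    [DecidableRel G.Adj] [DecidableRel H.Adj] (k₁ k₂ : ℤ) :
    (∀ (S₁ : Finset V₁) (S₂ : Finset V₂), IsDefensiveKAlliance G k₁ S₁ →
        IsDefensiveKAlliance H k₂ S₂ →
          IsDefensiveKAlliance (G □ H) (k₁ + k₂) (S₁ ×ˢ S₂)) ∧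
      ((∃ S₁ : Finset V₁, IsDefensiveKAlliance G k₁ S₁) →
        (∃ S₂ : Finset V₂, IsDefensiveKAlliance H k₂ S₂) →
          defensiveAllianceNum (G □ H) (k₁ + k₂) ≤
            defensiveAllianceNum G k₁ * defensiveAllianceNum H k₂) := by
  refine ⟨fun _ _ hS₁ hS₂ => hS₁.boxProd hS₂, fun h₁ h₂ => ?_⟩
  obtain ⟨T₁, hT₁, hcard₁⟩ := exists_card_eq_defensiveAllianceNum h₁
  obtain ⟨T₂, hT₂, hcard₂⟩ := exists_card_eq_defensiveAllianceNum h₂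
  calc defensiveAllianceNum (G □ H) (k₁ + k₂) ≤ (T₁ ×ˢ T₂).card :=
        defensiveAllianceNum_le_card (hT₁.boxProd hT₂)
    _ = defensiveAllianceNum G k₁ * defensiveAllianceNum H k₂ := by
        rw [card_product, hcard₁, hcard₂]
end
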